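/- arXiv:2307.14054 — 3 statements merged into one kernel-verified Lean document; each statement's English description precedes it below -/
import Mathlib

section
/- For every integer a ≥ 1 and n ≥ 0, the number of vertices of the metallic cube Π^a_n equals Σ_{k=0}^{⌊n/2⌋} C(n−k, k) · a^{n−2k}. -/
/-- Strings of length `n` over the alphabet `{0,1,…,a}` in which the letter `a`
occurs only immediately after a `0` (i.e. `a` appears only inside blocks `0a`). -/
def MetallicOK (a n : ℕ) (α : Fin n → Fin (a + 1)) : Prop :=
  ∀ i : Fin n, (α i : ℕ) = a →
    ∃ j : Fin n, (j : ℕ) + 1 = (i : ℕ) ∧ (α j : ℕ) = 0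

instance (a n : ℕ) : DecidablePred (MetallicOK a n) := fun α => by
  unfold MetallicOK; infer_instance

/-- Vertices of the metallic cube `Π^a_n`. -/
abbrev MetallicVertex (a n : ℕ) : Type :=
  {α : Fin n → Fin (a + 1) // MetallicOK a n α}

/-- The metallic cube `Π^a_n`: two strings are adjacent iff `Σ_i |α_i - β_i| = 1`. -/
def metallicCube (a n : ℕ) : SimpleGraph (MetallicVertex a n) where
  Adj u v := (∑ i : Fin n, Nat.dist (u.1 i : ℕ) (v.1 i : ℕ)) = 1
  symm := by
    constructor
    intro u v h
    simpa [Nat.dist_comm] using h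
  loopless := by
    constructor
    intro u h
    simp [Nat.dist_self] at h

instance (a n : ℕ) : DecidableRel (metallicCube a n).Adj := fun u v =>
  inferInstanceAs (Decidable ((∑ i : Fin n, Nat.dist (u.1 i : ℕ) (v.1 i : ℕ)) = 1))

/-!
Split a string of length `n + 1` into its first `n` letters and its last letter `x`. If `x < a`,
any metallic string of length `n` can be extended by `x`; if `x = a`, the string must end in the
block `0a`, so its prefix of length `n` is a metallic string ending in `0`, i.e. an arbitrary
metallic string of length `n - 1` followed by `0` (this uses `0 ≠ a`). Hence the number of
vertices satisfies `c (n + 2) = a * c (n + 1) + c n` with `c 0 = 1`, `c 1 = a`. By Pascal's rule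
the sum `∑_{i + j = n} C(i, j) a^(i - j)` satisfies the same recursion, and with `(i, j) = (n - k, k)`
it is the stated sum.
-/

open Finset

theorem metallicOK_snoc_iff {a n : ℕ} (α : Fin n → Fin (a + 1)) (x : Fin (a + 1)) :
    MetallicOK a (n + 1) (Fin.snoc α x) ↔
      MetallicOK a n α ∧ ((x : ℕ) = a → ∃ j : Fin n, (j : ℕ) + 1 = n ∧ (α j : ℕ) = 0) := by
  have hi : ∀ i : Fin n, n + 1 ≠ i := fun i => by omega
  simp [MetallicOK, Fin.forall_fin_succ', Fin.exists_fin_succ', hi]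

theorem metallicOK_iff_init {a n : ℕ} (α : Fin (n + 1) → Fin (a + 1)) :
    MetallicOK a (n + 1) α ↔ MetallicOK a n (Fin.init α) ∧
      ((α (Fin.last n) : ℕ) = a → ∃ j : Fin n, (j : ℕ) + 1 = n ∧ (Fin.init α j : ℕ) = 0) := by
  simpa using metallicOK_snoc_iff (Fin.init α) (α (Fin.last n))

namespace MetallicVertex

variable {a n : ℕ}

def lastFiberEquiv (x : Fin (a + 1)) :
    {v : MetallicVertex a (n + 1) // v.1 (Fin.last n) = x} ≃
      {β : MetallicVertex a n // (x : ℕ) = a → ∃ j : Fin n, (j : ℕ) + 1 = n ∧ (β.1 j : ℕ) = 0} where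
  toFun v :=
    have h := (metallicOK_iff_init v.1.1).1 v.1.2
    ⟨⟨Fin.init v.1.1, h.1⟩, fun hx => h.2 (by rwa [v.2])⟩
  invFun β := ⟨⟨Fin.snoc β.1.1 x, (metallicOK_snoc_iff _ _).2 ⟨β.1.2, β.2⟩⟩,
    Fin.snoc_last (α := fun _ => Fin (a + 1)) _ _⟩
  left_inv v := by
    ext : 2
    simp [← v.2]
  right_inv β := by
    ext : 2
    simp

theorem card_lastFiber_of_ne_last {x : Fin (a + 1)} (hx : x ≠ Fin.last a) :
    Fintype.card {v : MetallicVertex a (n + 1) // v.1 (Fin.last n) = x} =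
      Fintype.card (MetallicVertex a n) := by
  rw [Fintype.card_congr (lastFiberEquiv x)]
  have hx : (x : ℕ) ≠ a := fun h => hx (Fin.ext h)
  simp [hx]

theorem card_lastFiber_last_of_length_one :
    Fintype.card {v : MetallicVertex a 1 // v.1 (Fin.last 0) = Fin.last a} = 0 := by
  rw [Fintype.card_congr (lastFiberEquiv _)]
  simp

theorem card_lastFiber_last_add_two (ha : a ≠ 0) :
    Fintype.card {v : MetallicVertex a (n + 2) // v.1 (Fin.last (n + 1)) = Fin.last a} =
      Fintype.card (MetallicVertex a n) := by
  rw [Fintype.card_congr (lastFiberEquiv _),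
    ← card_lastFiber_of_ne_last (n := n) (x := 0) (by simp [Fin.ext_iff, Ne.symm ha])]
  refine Fintype.card_congr (Equiv.subtypeEquivRight fun β => ?_)
  have hi : ∀ i : Fin n, (i : ℕ) + 1 ≠ n + 1 := fun i => by omega
  simp only [Fin.val_last, forall_const, Fin.exists_fin_succ', Fin.val_castSucc, hi, false_and,
    exists_false, false_or, true_and]
  exact Fin.val_eq_zero_iff

theorem card_succ :
    Fintype.card (MetallicVertex a (n + 1)) = a * Fintype.card (MetallicVertex a n) +
      Fintype.card {v : MetallicVertex a (n + 1) // v.1 (Fin.last n) = Fin.last a} := by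
  rw [Fintype.card_congr
      (Equiv.sigmaFiberEquiv fun v : MetallicVertex a (n + 1) => v.1 (Fin.last n)).symm,
    Fintype.card_sigma, Fin.sum_univ_castSucc]
  simp [card_lastFiber_of_ne_last (Fin.castSucc_lt_last _).ne]

theorem card_zero : Fintype.card (MetallicVertex a 0) = 1 :=
  Fintype.card_eq_one_iff.2
    ⟨⟨Fin.elim0, fun i => i.elim0⟩, fun _ => Subtype.ext (funext fun i => i.elim0)⟩

theorem card_one : Fintype.card (MetallicVertex a 1) = a := by
  rw [card_succ, card_lastFiber_last_of_length_one, card_zero, mul_one, add_zero]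

theorem card_add_two (ha : a ≠ 0) :
    Fintype.card (MetallicVertex a (n + 2)) =
      a * Fintype.card (MetallicVertex a (n + 1)) + Fintype.card (MetallicVertex a n) := by
  rw [card_succ, card_lastFiber_last_add_two ha]

end MetallicVertex

def metallicNumber (a n : ℕ) : ℕ := ∑ p ∈ antidiagonal n, p.1.choose p.2 * a ^ (p.1 - p.2)

theorem metallicNumber_zero (a : ℕ) : metallicNumber a 0 = 1 := by
  simp [metallicNumber]

theorem metallicNumber_one (a : ℕ) : metallicNumber a 1 = a := by
  simp [metallicNumber, Nat.sum_antidiagonal_succ]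

theorem metallicNumber_add_two (a n : ℕ) :
    metallicNumber a (n + 2) = a * metallicNumber a (n + 1) + metallicNumber a n := by
  have h₂ : metallicNumber a (n + 2) =
      a ^ (n + 2) + ∑ p ∈ antidiagonal n, (p.1 + 1).choose (p.2 + 1) * a ^ (p.1 - p.2) := by
    rw [metallicNumber, Nat.sum_antidiagonal_succ, Nat.sum_antidiagonal_succ']
    simp
  have h₁ : metallicNumber a (n + 1) =
      a ^ (n + 1) + ∑ p ∈ antidiagonal n, p.1.choose (p.2 + 1) * a ^ (p.1 - (p.2 + 1)) := by
    rw [metallicNumber, Nat.sum_antidiagonal_succ']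
    simp
  have mul_term (i j : ℕ) :
      a * (i.choose (j + 1) * a ^ (i - (j + 1))) = i.choose (j + 1) * a ^ (i - j) := by
    rcases lt_or_ge i (j + 1) with h | h
    · simp [Nat.choose_eq_zero_of_lt h]
    · rw [show i - j = i - (j + 1) + 1 by omega, pow_succ]
      ring
  rw [h₂, h₁, metallicNumber, mul_add, mul_sum]
  simp only [mul_term, Nat.choose_succ_succ, add_mul, sum_add_distrib]
  ring

theorem metallicNumber_eq_sum_range (a n : ℕ) :
    metallicNumber a n = ∑ k ∈ range (n / 2 + 1), (n - k).choose k * a ^ (n - 2 * k) := by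
  rw [metallicNumber, ← Nat.sum_antidiagonal_swap]
  simp only [Prod.fst_swap, Prod.snd_swap]
  rw [Nat.sum_antidiagonal_eq_sum_range_succ (fun k l => l.choose k * a ^ (l - k))]
  have hvanish : ∀ k ∈ range (n + 1), k ∉ range (n / 2 + 1) →
      (n - k).choose k * a ^ (n - 2 * k) = 0 := fun k _ hk => by
    rw [Nat.choose_eq_zero_of_lt (by simp at hk; omega), zero_mul]
  rw [sum_subset (range_subset_range.2 (by omega)) hvanish]
  exact sum_congr rfl fun k _ => by rw [Nat.sub_sub, two_mul]

theorem card_metallicVertex (a n : ℕ) (ha : a ≠ 0) :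
    Fintype.card (MetallicVertex a n) = metallicNumber a n := by
  induction n using Nat.twoStepInduction with
  | zero => rw [MetallicVertex.card_zero, metallicNumber_zero]
  | one => rw [MetallicVertex.card_one, metallicNumber_one]
  | more n ih₀ ih₁ => rw [MetallicVertex.card_add_two ha, metallicNumber_add_two, ih₀, ih₁]

/-- the number of vertices of `Π^a_n` equals
`Σ_{k=0}^{⌊n/2⌋} C(n−k, k) · a^{n−2k}`. -/
theorem metallic_card_formula (a n : ℕ) (ha : 1 ≤ a) :
    Fintype.card (MetallicVertex a n) =
      ∑ k ∈ Finset.range (n / 2 + 1), Nat.choose (n - k) k * a ^ (n - 2 * k) := by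
  rw [card_metallicVertex a n (by omega), metallicNumber_eq_sum_range]
end

section
/- For every integer a ≥ 1 and n ≥ 1, the radius of the metallic cube Π^a_n equals ⌊a/2⌋·⌈n/2⌉ + ⌈a/2⌉·⌊n/2⌋. Moreover, the constant string ε̂ = εε⋯ε with ε = ⌊a/2⌋ attains this radius, i.e., its eccentricity equals ⌊a/2⌋·⌈n/2⌉ + ⌈a/2⌉·⌊n/2⌋. -/
/-- The eccentricity of a vertex of the metallic cube: the maximum distance
from `v` to any vertex. -/
noncomputable def ecc (a n : ℕ) (v : MetallicVertex a n) : ℕ :=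
  Finset.univ.sup fun u => (metallicCube a n).dist v u

/-!
Each edge changes the ℓ¹ distance of strings by exactly one, so graph distance dominates ℓ¹
distance. From the constant string `ε̂` they agree: moving the last coordinate that differs from
`⌊a/2⌋` one step towards it cannot break a block `0a`, because every later coordinate is
`⌊a/2⌋ ≠ a`. A coordinate lies within `⌊a/2⌋` of `⌊a/2⌋` unless it is the letter `a` and `a` is
odd, and at most `⌊n/2⌋` letters are `a`, since each is preceded by its own `0`; this bounds
`e(ε̂)`. Conversely, every vertex has a valid string at ℓ¹ distance at least `a` on each pair of
positions `2m, 2m+1` and at least `⌊a/2⌋` on an unpaired last position.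
-/

theorem SimpleGraph.exists_walk_length_eq_of_descent {V : Type*} {G : SimpleGraph V} {c : V}
    (f : V → ℕ) (hc : f c = 0) (step : ∀ v, v ≠ c → ∃ w, G.Adj w v ∧ f w + 1 = f v) (v : V) :
    ∃ p : G.Walk c v, p.length = f v := by
  induction hv : f v using Nat.strong_induction_on generalizing v with
  | _ k ih =>
    by_cases hvc : v = c
    · subst hvc
      exact ⟨.nil, by simp [← hv, hc]⟩
    · obtain ⟨w, hwv, hw⟩ := step v hvc
      obtain ⟨p, hp⟩ := ih (f w) (by omega) w rfl
      exact ⟨p.concat hwv, by simp [hp, ← hv, hw]⟩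

open Finset

lemma le_sum_range_of_pairs {g : ℕ → ℕ} {b c n : ℕ}
    (hpair : ∀ m, 2 * m + 1 < n → b ≤ g (2 * m) + g (2 * m + 1))
    (hlast : n % 2 = 1 → c ≤ g (n - 1)) :
    b * (n / 2) + n % 2 * c ≤ ∑ i ∈ range n, g i := by
  have heven : ∀ m, 2 * m ≤ n → b * m ≤ ∑ i ∈ range (2 * m), g i := by
    intro m
    induction m with
    | zero => simp
    | succ m ih =>
      intro hm
      rw [show 2 * (m + 1) = 2 * m + 1 + 1 by ring, sum_range_succ, sum_range_succ, mul_add_one]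
      have := ih (by omega)
      have := hpair m (by omega)
      omega
  obtain ⟨m, rfl | rfl⟩ := Nat.even_or_odd' n
  · simpa using heven m le_rfl
  · rw [sum_range_succ]
    have := heven m (by omega)
    have := hlast (by omega)
    simp only [Nat.add_sub_cancel] at this
    rw [show (2 * m + 1) / 2 = m by omega, show (2 * m + 1) % 2 = 1 by omega]
    omega

namespace MetallicCube

variable {a n : ℕ}

def l1Dist (u v : Fin n → Fin (a + 1)) : ℕ := ∑ i, Nat.dist (u i) (v i)

lemma adj_iff {u v : MetallicVertex a n} : (metallicCube a n).Adj u v ↔ l1Dist u.1 v.1 = 1 :=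
  Iff.rfl

lemma l1Dist_comm (u v : Fin n → Fin (a + 1)) : l1Dist u v = l1Dist v u := by
  simp only [l1Dist, Nat.dist_comm]

lemma l1Dist_triangle (u v w : Fin n → Fin (a + 1)) : l1Dist u w ≤ l1Dist u v + l1Dist v w := by
  rw [l1Dist, l1Dist, l1Dist, ← sum_add_distrib]
  exact sum_le_sum fun i _ => Nat.dist.triangle_inequality _ _ _

lemma l1Dist_update (c u : Fin n → Fin (a + 1)) (i : Fin n) (b : Fin (a + 1)) :
    l1Dist c (Function.update u i b) + Nat.dist (c i) (u i) = l1Dist c u + Nat.dist (c i) b := by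
  simp only [l1Dist, ← add_sum_erase _ _ (mem_univ i), Function.update_self]
  rw [sum_congr rfl fun j hj => by rw [Function.update_of_ne (ne_of_mem_erase hj)]]
  ring

lemma l1Dist_update_self (u : Fin n → Fin (a + 1)) (i : Fin n) (b : Fin (a + 1)) :
    l1Dist u (Function.update u i b) = Nat.dist (u i) b := by
  simpa [l1Dist] using l1Dist_update u u i b

lemma l1Dist_le_length {u v : MetallicVertex a n} (p : (metallicCube a n).Walk u v) :
    l1Dist u.1 v.1 ≤ p.length := by
  induction p with
  | nil => simp [l1Dist]
  | @cons u w v h p ih =>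
    rw [SimpleGraph.Walk.length_cons]
    have := l1Dist_triangle u.1 w.1 v.1
    rw [adj_iff.mp h] at this
    omega

def center (ha : 1 ≤ a) : MetallicVertex a n :=
  ⟨fun _ => ⟨a / 2, Nat.lt_succ_of_le (Nat.div_le_self a 2)⟩,
    fun _ h => absurd h (Nat.ne_of_lt (Nat.div_lt_self ha one_lt_two))⟩

lemma exists_adj_l1Dist_center_succ (ha : 1 ≤ a) (u : MetallicVertex a n) (hu : u ≠ center ha) :
    ∃ w, (metallicCube a n).Adj w u ∧
      l1Dist (center ha).1 w.1 + 1 = l1Dist (center ha).1 u.1 := by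
  have hne : (univ.filter fun i => (u.1 i : ℕ) ≠ a / 2).Nonempty := by
    rw [filter_nonempty_iff]
    by_contra! h
    exact hu (Subtype.ext (funext fun i => Fin.ext (by simpa [center] using h i)))
  set i := (univ.filter fun i => (u.1 i : ℕ) ≠ a / 2).max' hne
  have hi : (u.1 i : ℕ) ≠ a / 2 := (mem_filter.mp (max'_mem _ hne)).2
  have hlater : ∀ j, i < j → (u.1 j : ℕ) = a / 2 := fun j hj => by
    by_contra h
    exact (le_max' _ j (by simpa using h)).not_gt hj
  have hua := (u.1 i).isLt
  have hha : a / 2 < a := Nat.div_lt_self ha one_lt_two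
  let b : Fin (a + 1) :=
    ⟨if (u.1 i : ℕ) < a / 2 then u.1 i + 1 else u.1 i - 1, by split_ifs <;> omega⟩
  have hb : (b : ℕ) ≠ a := by simp only [b]; split_ifs <;> omega
  have hub : Nat.dist (u.1 i) b = 1 := by
    simp only [b, Nat.dist]; split_ifs <;> omega
  have hcb : Nat.dist (a / 2) b + 1 = Nat.dist (a / 2) (u.1 i) := by
    simp only [b, Nat.dist]; split_ifs <;> omega
  have hok : MetallicOK a n (Function.update u.1 i b) := by
    intro j hj
    have hji : j ≠ i := by rintro rfl; simp [hb] at hj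
    rw [Function.update_of_ne hji] at hj
    obtain ⟨k, hkj, hk⟩ := u.2 j hj
    have hki : k ≠ i := by
      rintro rfl
      exact hb (by rw [hlater j (by rw [Fin.lt_def]; omega)] at hj; omega)
    exact ⟨k, hkj, by rwa [Function.update_of_ne hki]⟩
  refine ⟨⟨_, hok⟩, adj_iff.mpr ?_, ?_⟩
  · rw [l1Dist_comm, l1Dist_update_self, hub]
  · have := l1Dist_update (center ha).1 u.1 i b
    simp only [center] at this ⊢
    omega

lemma exists_walk_center (ha : 1 ≤ a) (u : MetallicVertex a n) :
    ∃ p : (metallicCube a n).Walk (center ha) u, p.length = l1Dist (center ha).1 u.1 :=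
  SimpleGraph.exists_walk_length_eq_of_descent (fun v => l1Dist (center ha).1 v.1)
    (by simp [l1Dist]) (exists_adj_l1Dist_center_succ ha) u

lemma connected (ha : 1 ≤ a) : (metallicCube a n).Connected :=
  haveI : Nonempty (MetallicVertex a n) := ⟨center ha⟩
  .mk fun u v =>
    (exists_walk_center ha u).elim fun p _ => (exists_walk_center ha v).elim fun q _ =>
      ⟨p.reverse.append q⟩

lemma l1Dist_le_dist (ha : 1 ≤ a) (u v : MetallicVertex a n) :
    l1Dist u.1 v.1 ≤ (metallicCube a n).dist u v := by
  obtain ⟨p, hp⟩ := ((connected ha).preconnected u v).exists_walk_length_eq_dist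
  exact hp ▸ l1Dist_le_length p

lemma dist_center (ha : 1 ≤ a) (u : MetallicVertex a n) :
    (metallicCube a n).dist (center ha) u = l1Dist (center ha).1 u.1 :=
  (exists_walk_center ha u).elim fun p hp =>
    le_antisymm (hp ▸ SimpleGraph.dist_le p) (l1Dist_le_dist ha _ _)

lemma card_filter_val_eq_mul_two_le (ha : 1 ≤ a) (u : MetallicVertex a n) :
    #{i | (u.1 i : ℕ) = a} * 2 ≤ n := by
  set A : Finset (Fin n) := {i | (u.1 i : ℕ) = a}
  set Z : Finset (Fin n) := {i | (u.1 i : ℕ) = 0}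
  have hAZ : #A ≤ #Z := by
    refine card_le_card_of_injOn (fun i => ⟨i - 1, by omega⟩) (fun i hi => ?_) ?_
    · obtain ⟨j, hj, hj0⟩ := u.2 i (mem_filter.mp hi).2
      have : j = ⟨i - 1, by omega⟩ := Fin.ext (by simp; omega)
      simpa [Z, ← this] using hj0
    · intro i hi j hj hij
      obtain ⟨i', hi', -⟩ := u.2 i (mem_filter.mp hi).2
      obtain ⟨j', hj', -⟩ := u.2 j (mem_filter.mp hj).2
      simp only [Fin.mk.injEq] at hij
      exact Fin.ext (by omega)
  have hdisj : Disjoint A Z := disjoint_filter.mpr fun i _ h => by omega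
  have := card_union_of_disjoint hdisj ▸ (A ∪ Z).card_le_univ
  simp only [Fintype.card_fin] at this
  omega

lemma dist_half_le (x : Fin (a + 1)) :
    Nat.dist (a / 2) x ≤ a / 2 + if (x : ℕ) = a then a % 2 else 0 := by
  have := x.isLt
  simp only [Nat.dist]
  split_ifs <;> omega

lemma l1Dist_center_le (ha : 1 ≤ a) (u : MetallicVertex a n) :
    l1Dist (center ha).1 u.1 ≤ n * (a / 2) + n / 2 * (a % 2) := calc
  l1Dist (center ha).1 u.1 ≤ ∑ i, (a / 2 + if (u.1 i : ℕ) = a then a % 2 else 0) :=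
    sum_le_sum fun i _ => dist_half_le (u.1 i)
  _ = n * (a / 2) + #{i | (u.1 i : ℕ) = a} * (a % 2) := by
    simp [sum_add_distrib, sum_ite]
  _ ≤ n * (a / 2) + n / 2 * (a % 2) := by
    gcongr
    have := card_filter_val_eq_mul_two_le ha u
    omega

lemma radius_formula_eq_coord_bound (a n : ℕ) :
    a / 2 * ((n + 1) / 2) + (a + 1) / 2 * (n / 2) = n * (a / 2) + n / 2 * (a % 2) := by
  rw [show (a + 1) / 2 = a / 2 + a % 2 by omega, show (n + 1) / 2 = n / 2 + n % 2 by omega]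
  have hn : n = 2 * (n / 2) + n % 2 := (Nat.div_add_mod n 2).symm
  generalize n / 2 = q, n % 2 = t at hn ⊢
  subst hn
  ring

lemma radius_formula_eq_pair_bound (a n : ℕ) :
    a / 2 * ((n + 1) / 2) + (a + 1) / 2 * (n / 2) = a * (n / 2) + n % 2 * (a / 2) := by
  rw [show (a + 1) / 2 = a / 2 + a % 2 by omega, show (n + 1) / 2 = n / 2 + n % 2 by omega]
  have ha : a = 2 * (a / 2) + a % 2 := (Nat.div_add_mod a 2).symm
  generalize a / 2 = p, a % 2 = s at ha ⊢
  subst ha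
  ring

/-- Positions `2m, 2m+1` go to `0a` or `(a-1)0`, each at distance at least `a` from `v`;
an unpaired last position goes to `0` or `a-1`, at distance at least `⌊a/2⌋`. -/
def antipode (v : Fin n → Fin (a + 1)) (i : Fin n) : Fin (a + 1) :=
  if (i : ℕ) % 2 = 1 then
    if v i ≤ v ⟨i - 1, by omega⟩ then Fin.last a else 0
  else if h : (i : ℕ) + 1 < n then
    if v ⟨i + 1, h⟩ ≤ v i then 0 else ⟨a - 1, by omega⟩
  else if a / 2 ≤ (v i : ℕ) then 0 else ⟨a - 1, by omega⟩

lemma antipode_metallicOK (ha : 1 ≤ a) (v : Fin n → Fin (a + 1)) :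
    MetallicOK a n (antipode v) := by
  intro i hi
  have hodd : (i : ℕ) % 2 = 1 := by
    by_contra h
    simp only [antipode, if_neg h] at hi
    split_ifs at hi <;> simp at hi <;> omega
  have hle : v i ≤ v ⟨i - 1, by omega⟩ := by
    by_contra h
    simp [antipode, hodd, h] at hi
    omega
  refine ⟨⟨i - 1, by omega⟩, by simp; omega, ?_⟩
  have hprev : ((i : ℕ) - 1) % 2 ≠ 1 := by omega
  have hnext : (i : ℕ) - 1 + 1 < n := by omega
  have hi' : (⟨i - 1 + 1, hnext⟩ : Fin n) = i := Fin.ext (by simp; omega)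
  simp [antipode, hprev, hnext, hi', hle]

lemma pair_le_dist_antipode (v : Fin n → Fin (a + 1)) (m : ℕ) (hm : 2 * m + 1 < n) :
    a ≤ Nat.dist (v ⟨2 * m, by omega⟩) (antipode v ⟨2 * m, by omega⟩) +
      Nat.dist (v ⟨2 * m + 1, hm⟩) (antipode v ⟨2 * m + 1, hm⟩) := by
  have hx := (v ⟨2 * m, by omega⟩).isLt
  simp only [antipode, Nat.mul_mod_right, show (2 * m + 1) % 2 = 1 by omega, hm,
    Nat.add_sub_cancel, zero_ne_one, ↓reduceIte, ↓reduceDIte]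
  split_ifs with h <;> simp only [Fin.le_def] at h <;> simp [Nat.dist] <;> omega

lemma half_le_dist_antipode_last (v : Fin n → Fin (a + 1)) (hn : n % 2 = 1) :
    a / 2 ≤ Nat.dist (v ⟨n - 1, by omega⟩) (antipode v ⟨n - 1, by omega⟩) := by
  have hx := (v ⟨n - 1, by omega⟩).isLt
  simp only [antipode, show (n - 1) % 2 ≠ 1 by omega, show ¬ n - 1 + 1 < n by omega,
    ↓reduceIte, ↓reduceDIte]
  split_ifs <;> simp [Nat.dist] <;> omega

lemma le_l1Dist_antipode (v : Fin n → Fin (a + 1)) :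
    a * (n / 2) + n % 2 * (a / 2) ≤ l1Dist v (antipode v) := by
  let g : ℕ → ℕ := fun i => if h : i < n then Nat.dist (v ⟨i, h⟩) (antipode v ⟨i, h⟩) else 0
  have hg : l1Dist v (antipode v) = ∑ i ∈ range n, g i := by
    rw [← Fin.sum_univ_eq_sum_range]
    exact sum_congr rfl fun i _ => by simp [g]
  rw [hg]
  refine le_sum_range_of_pairs (fun m hm => ?_) fun hn => ?_
  · simpa [g, hm, show 2 * m < n by omega] using pair_le_dist_antipode v m hm
  · simpa [g, show n - 1 < n by omega] using half_le_dist_antipode_last v hn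

end MetallicCube

open MetallicCube in
theorem metallic_radius_general (a n : ℕ) (ha : 1 ≤ a) :
    ecc a n ⟨fun _ => ⟨a / 2, Nat.lt_succ_of_le (Nat.div_le_self a 2)⟩,
        fun _ h => absurd h (Nat.ne_of_lt (Nat.div_lt_self ha one_lt_two))⟩ =
      a / 2 * ((n + 1) / 2) + (a + 1) / 2 * (n / 2) ∧
    ∀ v : MetallicVertex a n,
      a / 2 * ((n + 1) / 2) + (a + 1) / 2 * (n / 2) ≤ ecc a n v := by
  have lower : ∀ v : MetallicVertex a n,
      a / 2 * ((n + 1) / 2) + (a + 1) / 2 * (n / 2) ≤ ecc a n v := fun v => calc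
    _ = a * (n / 2) + n % 2 * (a / 2) := radius_formula_eq_pair_bound a n
    _ ≤ l1Dist v.1 (antipode v.1) := le_l1Dist_antipode v.1
    _ ≤ (metallicCube a n).dist v ⟨_, antipode_metallicOK ha v.1⟩ :=
      l1Dist_le_dist ha v ⟨_, antipode_metallicOK ha v.1⟩
    _ ≤ ecc a n v := le_sup (mem_univ _)
  refine ⟨le_antisymm (Finset.sup_le fun u _ => ?_) (lower (center ha)), lower⟩
  calc (metallicCube a n).dist (center ha) u = l1Dist (center ha).1 u.1 := dist_center ha u
    _ ≤ n * (a / 2) + n / 2 * (a % 2) := l1Dist_center_le ha u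
    _ = a / 2 * ((n + 1) / 2) + (a + 1) / 2 * (n / 2) := (radius_formula_eq_coord_bound a n).symm

/-- the radius of `Π^a_n` equals `⌊a/2⌋·⌈n/2⌉ + ⌈a/2⌉·⌊n/2⌋`, and the
constant string `ε̂` with `ε = ⌊a/2⌋` attains it. -/
theorem metallic_radius (a n : ℕ) (ha : 1 ≤ a) (hn : 1 ≤ n) :
    ecc a n ⟨fun _ => ⟨a / 2, Nat.lt_succ_of_le (Nat.div_le_self a 2)⟩,
        fun _ h => absurd h (Nat.ne_of_lt (Nat.div_lt_self ha one_lt_two))⟩ =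
      a / 2 * ((n + 1) / 2) + (a + 1) / 2 * (n / 2) ∧
    ∀ v : MetallicVertex a n,
      a / 2 * ((n + 1) / 2) + (a + 1) / 2 * (n / 2) ≤ ecc a n v :=
  metallic_radius_general a n ha
end

section
/- Let a ≥ 1 and n ≥ 1 with both a and n odd, and set ε = ⌊a/2⌋ = (a−1)/2. Then the center of the metallic cube Π^a_n consists of the single vertex ε̂ = εε⋯ε (the constant string of length n). -/
/-!
The graph distance of `Π^a_n` is the `ℓ¹` distance: from any `u ≠ v` one can move one letter
of `u` by one unit towards `v` and stay metallic. Write `a = 2ε + 1`. Seen from `ε̂`, every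
letter is at distance at most `ε` except a letter `a`, at distance `ε + 1`; as each `a` follows a
`0`, at most `⌊n/2⌋` letters are `a`, so `e(ε̂) ≤ εn + ⌊n/2⌋`. Conversely, cut any `v` into
consecutive pairs and answer a pair `(x, y)` by `0a` if `y ≤ x` and otherwise by letters far from
`x` and `y`: this gives a vertex at distance at least `εn + ⌊n/2⌋` from `v`. If `n` is odd and
`v ≠ ε̂`, then `v` has a letter `≠ ε` at an even position, which we leave unpaired so that it
gains `ε + 1`, or a strict descent, answered by `0a` with gain `a + 1`; either way one more.
-/

open Finset

section GraphDistance

variable {a n : ℕ}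

def l1Dist (u v : MetallicVertex a n) : ℕ :=
  ∑ i, Nat.dist (u.1 i : ℕ) (v.1 i : ℕ)

theorem metallicCube_adj_iff {u v : MetallicVertex a n} :
    (metallicCube a n).Adj u v ↔ l1Dist u v = 1 :=
  Iff.rfl

theorem l1Dist_comm (u v : MetallicVertex a n) : l1Dist u v = l1Dist v u := by
  simp only [l1Dist, Nat.dist_comm]

theorem l1Dist_self (u : MetallicVertex a n) : l1Dist u u = 0 := by
  simp [l1Dist]

theorem eq_of_l1Dist_eq_zero {u v : MetallicVertex a n} (h : l1Dist u v = 0) : u = v :=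
  Subtype.ext <| funext fun i => Fin.ext <|
    Nat.eq_of_dist_eq_zero (Finset.sum_eq_zero_iff.mp h i (mem_univ i))

theorem l1Dist_triangle (u w v : MetallicVertex a n) :
    l1Dist u v ≤ l1Dist u w + l1Dist w v := by
  rw [l1Dist, l1Dist, l1Dist, ← sum_add_distrib]
  exact sum_le_sum fun i _ => Nat.dist.triangle_inequality _ _ _

theorem l1Dist_le_length {u v : MetallicVertex a n} (p : (metallicCube a n).Walk u v) :
    l1Dist u v ≤ p.length := by
  induction p with
  | nil => simp [l1Dist_self]
  | @cons u w v hadj p ih =>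
    have := l1Dist_triangle u w v
    rw [metallicCube_adj_iff] at hadj
    rw [SimpleGraph.Walk.length_cons]
    omega

theorem sum_dist_update_add (α β : Fin n → Fin (a + 1)) (i : Fin n) (c : Fin (a + 1)) :
    ∑ k, Nat.dist (Function.update α i c k : ℕ) (β k : ℕ) + Nat.dist (α i : ℕ) (β i : ℕ) =
      ∑ k, Nat.dist (α k : ℕ) (β k : ℕ) + Nat.dist (c : ℕ) (β i : ℕ) := by
  classical
  rw [← add_sum_erase _ _ (mem_univ i), ← add_sum_erase _ _ (mem_univ i),
    Function.update_self,
    sum_congr rfl fun k hk => by rw [Function.update_of_ne (ne_of_mem_erase hk)]]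
  ring

theorem MetallicOK.update {α : Fin n → Fin (a + 1)} (hα : MetallicOK a n α) (i : Fin n)
    (c : Fin (a + 1)) (hc : (c : ℕ) = a → ∃ j : Fin n, (j : ℕ) + 1 = i ∧ (α j : ℕ) = 0)
    (hnext : ∀ k : Fin n, (i : ℕ) + 1 = k → (α k : ℕ) = a → (c : ℕ) = 0) :
    MetallicOK a n (Function.update α i c) := by
  intro k hk
  by_cases hki : k = i
  · subst hki
    rw [Function.update_self] at hk
    obtain ⟨j, hjk, hj⟩ := hc hk
    refine ⟨j, hjk, ?_⟩
    rwa [Function.update_of_ne (Fin.ne_of_val_ne (by omega))]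
  · rw [Function.update_of_ne hki] at hk
    obtain ⟨j, hjk, hj⟩ := hα k hk
    refine ⟨j, hjk, ?_⟩
    by_cases hji : j = i
    · subst hji
      rw [Function.update_self]
      exact hnext k hjk hk
    · rwa [Function.update_of_ne hji]

theorem MetallicOK.update_pred {α : Fin n → Fin (a + 1)} (hα : MetallicOK a n α) (i : Fin n)
    (hi : 0 < (α i : ℕ)) :
    MetallicOK a n (Function.update α i ⟨α i - 1, by omega⟩) := by
  refine hα.update i _ (fun h => by simp only at h; omega) fun k hik hk => ?_
  obtain ⟨j, hjk, hj⟩ := hα k hk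
  obtain rfl : j = i := Fin.ext (by omega)
  omega

theorem MetallicOK.update_succ {α β : Fin n → Fin (a + 1)} (hα : MetallicOK a n α)
    (hβ : MetallicOK a n β) (hle : ∀ k, (α k : ℕ) ≤ β k) (i : Fin n) (hi : (α i : ℕ) < β i) :
    MetallicOK a n (Function.update α i ⟨α i + 1, by omega⟩) := by
  refine hα.update i _ (fun h => ?_) fun k hik hk => ?_
  · obtain ⟨j, hji, hj⟩ := hβ i (by simp only at h; omega)
    exact ⟨j, hji, by have := hle j; omega⟩
  · obtain ⟨j, hjk, hj⟩ := hβ k (by have := hle k; omega)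
    obtain rfl : j = i := Fin.ext (by omega)
    omega

theorem exists_adj_l1Dist_add_one_eq {u v : MetallicVertex a n} (hne : u ≠ v) :
    ∃ w, (metallicCube a n).Adj u w ∧ l1Dist w v + 1 = l1Dist u v := by
  have step : ∀ (i : Fin n) (c : Fin (a + 1)) (hc : MetallicOK a n (Function.update u.1 i c)),
      Nat.dist (u.1 i : ℕ) c = 1 → Nat.dist (c : ℕ) (v.1 i) + 1 = Nat.dist (u.1 i : ℕ) (v.1 i) →
      ∃ w, (metallicCube a n).Adj u w ∧ l1Dist w v + 1 = l1Dist u v := by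
    intro i c hc hu hv
    refine ⟨⟨_, hc⟩, ?_, ?_⟩
    · have := sum_dist_update_add u.1 u.1 i c
      rw [metallicCube_adj_iff, l1Dist_comm]
      change ∑ k, Nat.dist (Function.update u.1 i c k : ℕ) (u.1 k) = 1
      simp only [Nat.dist_self, sum_const_zero, Nat.dist_comm (c : ℕ)] at this
      omega
    · have := sum_dist_update_add u.1 v.1 i c
      change ∑ k, Nat.dist (Function.update u.1 i c k : ℕ) (v.1 k) + 1 = l1Dist u v
      rw [l1Dist]
      omega
  by_cases hdown : ∃ i, (v.1 i : ℕ) < u.1 i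
  · obtain ⟨i, hi⟩ := hdown
    exact step i _ (u.2.update_pred i (by omega))
      (by simp only [Nat.dist]; omega) (by simp only [Nat.dist]; omega)
  · push Not at hdown
    obtain ⟨i, hi⟩ : ∃ i, (u.1 i : ℕ) < v.1 i := by
      by_contra! h
      exact hne (Subtype.ext <| funext fun i => Fin.ext (le_antisymm (hdown i) (h i)))
    exact step i _ (u.2.update_succ v.2 hdown i hi)
      (by simp only [Nat.dist]; omega) (by simp only [Nat.dist]; omega)

theorem exists_walk_length_eq_l1Dist (u v : MetallicVertex a n) :
    ∃ p : (metallicCube a n).Walk u v, p.length = l1Dist u v := by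
  induction h : l1Dist u v generalizing u with
  | zero => obtain rfl := eq_of_l1Dist_eq_zero h; exact ⟨.nil, rfl⟩
  | succ d ih =>
    have hne : u ≠ v := by rintro rfl; simp [l1Dist_self] at h
    obtain ⟨w, hadj, hw⟩ := exists_adj_l1Dist_add_one_eq hne
    obtain ⟨p, hp⟩ := ih w (by omega)
    exact ⟨.cons hadj p, by simp [hp]⟩

theorem metallicCube_dist_eq_l1Dist (u v : MetallicVertex a n) :
    (metallicCube a n).dist u v = l1Dist u v := by
  obtain ⟨p, hp⟩ := exists_walk_length_eq_l1Dist u v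
  obtain ⟨q, hq⟩ := (SimpleGraph.Walk.reachable p).exists_walk_length_eq_dist
  exact le_antisymm (hp ▸ SimpleGraph.dist_le p) (hq ▸ l1Dist_le_length q)

theorem ecc_eq_sup_l1Dist (v : MetallicVertex a n) : ecc a n v = univ.sup (l1Dist v) :=
  sup_congr rfl fun u _ => metallicCube_dist_eq_l1Dist v u

end GraphDistance

section Words

/-- For `a ≥ 1`, the strings of `MetallicOK`, generated as concatenations of the tiles `x`
(`x < a`) and `0a`. -/
inductive IsMetallicWord (a : ℕ) : List ℕ → Prop
  | nil : IsMetallicWord a []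
  | cons {x : ℕ} {l : List ℕ} : x < a → IsMetallicWord a l → IsMetallicWord a (x :: l)
  | zero_top {l : List ℕ} : IsMetallicWord a l → IsMetallicWord a (0 :: a :: l)

def wordDist (l₁ l₂ : List ℕ) : ℕ :=
  (List.zipWith Nat.dist l₁ l₂).sum

variable {a : ℕ}

namespace IsMetallicWord

theorem append {l₁ l₂ : List ℕ} (h₁ : IsMetallicWord a l₁) (h₂ : IsMetallicWord a l₂) :
    IsMetallicWord a (l₁ ++ l₂) := by
  induction h₁ with
  | nil => exact h₂
  | cons hx _ ih => exact cons hx ih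
  | zero_top _ ih => exact zero_top ih

theorem le {l : List ℕ} (h : IsMetallicWord a l) : ∀ x ∈ l, x ≤ a := by
  induction h with
  | nil => simp
  | cons hx _ ih => exact List.forall_mem_cons.mpr ⟨hx.le, ih⟩
  | zero_top _ ih => simpa using ih

theorem exists_pred_eq_zero (ha : 1 ≤ a) {l : List ℕ} (h : IsMetallicWord a l) :
    ∀ (i : ℕ) (hi : i < l.length), l[i] = a →
      ∃ (j : ℕ) (hj : j < l.length), j + 1 = i ∧ l[j] = 0 := by
  induction h with
  | nil => simp
  | @cons x l hx _ ih =>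
    rintro (_ | i) hi hia
    · simp only [List.getElem_cons_zero] at hia; omega
    · obtain ⟨j, hj, rfl, hj0⟩ := ih i (by simpa using hi) (by simpa using hia)
      exact ⟨j + 1, by simpa using hj, rfl, by simpa using hj0⟩
  | @zero_top l _ ih =>
    rintro (_ | _ | i) hi hia
    · simp only [List.getElem_cons_zero] at hia; omega
    · exact ⟨0, by simp, rfl, rfl⟩
    · obtain ⟨j, hj, rfl, hj0⟩ := ih i (by simpa using hi) (by simpa using hia)
      exact ⟨j + 2, by simpa using hj, rfl, by simpa using hj0⟩

theorem exists_vertex (ha : 1 ≤ a) {n : ℕ} {l : List ℕ} (h : IsMetallicWord a l)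
    (hlen : l.length = n) :
    ∃ u : MetallicVertex a n, List.ofFn (fun i => (u.1 i : ℕ)) = l := by
  subst hlen
  refine ⟨⟨fun i => ⟨l[i], Nat.lt_succ_of_le (h.le _ (List.getElem_mem _))⟩, fun i hi => ?_⟩,
    List.ofFn_getElem⟩
  obtain ⟨j, hj, hji, hj0⟩ := h.exists_pred_eq_zero ha i i.2 hi
  exact ⟨⟨j, hj⟩, hji, hj0⟩

end IsMetallicWord

theorem wordDist_cons (x y : ℕ) (l₁ l₂ : List ℕ) :
    wordDist (x :: l₁) (y :: l₂) = Nat.dist x y + wordDist l₁ l₂ := by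
  simp [wordDist]

theorem wordDist_append {l₁ l₂ : List ℕ} (h : l₁.length = l₂.length) (l₁' l₂' : List ℕ) :
    wordDist (l₁ ++ l₁') (l₂ ++ l₂') = wordDist l₁ l₂ + wordDist l₁' l₂' := by
  simp [wordDist, List.zipWith_append h]

theorem wordDist_ofFn {n : ℕ} (f g : Fin n → ℕ) :
    wordDist (List.ofFn f) (List.ofFn g) = ∑ i, Nat.dist (f i) (g i) := by
  rw [wordDist, ← List.sum_ofFn]
  congr 1
  exact List.ext_getElem (by simp) (by simp)

end Words

section FarWords

variable {a : ℕ}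

def freeLetter (a z : ℕ) : ℕ :=
  if z < a / 2 then a - 1 else 0

theorem freeLetter_lt (ha : 1 ≤ a) (z : ℕ) : freeLetter a z < a := by
  unfold freeLetter; split <;> omega

theorem half_le_dist_freeLetter (z : ℕ) : a / 2 ≤ Nat.dist (freeLetter a z) z := by
  unfold freeLetter Nat.dist; split <;> omega

theorem half_lt_dist_freeLetter (hao : Odd a) {z : ℕ} (hz : z ≠ a / 2) :
    a / 2 < Nat.dist (freeLetter a z) z := by
  have := Nat.two_mul_div_two_add_one_of_odd hao
  unfold freeLetter Nat.dist; split <;> omega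

theorem wordDist_pair (x₁ x₂ y₁ y₂ : ℕ) :
    wordDist [x₁, x₂] [y₁, y₂] = Nat.dist x₁ y₁ + Nat.dist x₂ y₂ := by
  simp [wordDist]

theorem exists_pair_le_wordDist (hao : Odd a) (x : ℕ) {y : ℕ} (hy : y ≤ a) :
    ∃ p, p.length = 2 ∧ IsMetallicWord a p ∧ a ≤ wordDist p [x, y] := by
  by_cases hyx : y ≤ x
  · refine ⟨[0, a], rfl, .zero_top .nil, ?_⟩
    rw [wordDist_pair, Nat.dist, Nat.dist]
    omega
  · refine ⟨[freeLetter a x, freeLetter a y], rfl,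
      .cons (freeLetter_lt hao.pos x) (.cons (freeLetter_lt hao.pos y) .nil), ?_⟩
    have := Nat.two_mul_div_two_add_one_of_odd hao
    have hx := half_le_dist_freeLetter (a := a) x
    have hy := half_le_dist_freeLetter (a := a) y
    rw [wordDist_pair]
    rcases em (x = a / 2) with rfl | hxe
    · have := half_lt_dist_freeLetter hao (z := y) (by omega)
      omega
    · have := half_lt_dist_freeLetter hao hxe
      omega

theorem exists_far_word (hao : Odd a) :
    ∀ w : List ℕ, (∀ x ∈ w, x ≤ a) →
      ∃ u, u.length = w.length ∧ IsMetallicWord a u ∧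
        a / 2 * w.length + w.length / 2 ≤ wordDist u w
  | [], _ => ⟨[], rfl, .nil, by simp⟩
  | [x], _ => by
    refine ⟨[freeLetter a x], rfl, .cons (freeLetter_lt hao.pos x) .nil, ?_⟩
    simpa [wordDist] using half_le_dist_freeLetter (a := a) x
  | x :: y :: w, hw => by
    obtain ⟨p, hplen, hp, hpw⟩ := exists_pair_le_wordDist hao x (hw y (by simp))
    obtain ⟨u, hulen, hu, huw⟩ := exists_far_word hao w fun z hz => hw z (by simp [hz])
    refine ⟨p ++ u, by rw [List.length_append, hplen, hulen, add_comm]; rfl, hp.append hu, ?_⟩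
    change _ ≤ wordDist (p ++ u) ([x, y] ++ w)
    rw [wordDist_append (by simp [hplen])]
    have := Nat.two_mul_div_two_add_one_of_odd hao
    have : a / 2 * (w.length + 1 + 1) = a / 2 * w.length + 2 * (a / 2) := by ring
    simp only [List.length_cons]
    omega

end FarWords

section OddLength

theorem exists_split_of_odd_length (e : ℕ) :
    ∀ w : List ℕ, Odd w.length → (∃ x ∈ w, x ≠ e) →
      (∃ p x s, w = p ++ x :: s ∧ Even p.length ∧ x ≠ e) ∨
        ∃ p x y s, w = p ++ x :: y :: s ∧ y < x
  | [], hodd, _ => absurd hodd (by simp)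
  | [x], _, hne => .inl ⟨[], x, [], rfl, ⟨0, rfl⟩, by simpa using hne⟩
  | x :: y :: w, hodd, hne => by
    by_cases hx : x = e
    swap
    · exact .inl ⟨[], x, y :: w, rfl, ⟨0, rfl⟩, hx⟩
    by_cases hyx : y < x
    · exact .inr ⟨[], x, y, w, rfl, hyx⟩
    by_cases hy : y = e
    · have hw : Odd w.length := by simpa [Nat.odd_add_one, parity_simps] using hodd
      have hne' : ∃ z ∈ w, z ≠ e := by simpa [hx, hy] using hne
      rcases exists_split_of_odd_length e w hw hne' with
        ⟨p, z, s, rfl, hp, hz⟩ | ⟨p, z, t, s, rfl, hzt⟩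
      · exact .inl ⟨x :: y :: p, z, s, rfl, by simpa [parity_simps] using hp, hz⟩
      · exact .inr ⟨x :: y :: p, z, t, s, rfl, hzt⟩
    obtain _ | ⟨z, w⟩ := w
    · simp [Nat.odd_iff] at hodd
    by_cases hzy : z < y
    · exact .inr ⟨[x], y, z, w, rfl, hzy⟩
    · exact .inl ⟨[x, y], z, w, rfl, ⟨1, rfl⟩, by omega⟩

variable {a : ℕ}

theorem exists_far_word_of_odd_length (hao : Odd a) (w : List ℕ) (hw : ∀ x ∈ w, x ≤ a)
    (hodd : Odd w.length) (hne : ∃ x ∈ w, x ≠ a / 2) :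
    ∃ u, u.length = w.length ∧ IsMetallicWord a u ∧
      a / 2 * w.length + w.length / 2 + 1 ≤ wordDist u w := by
  have ha := Nat.two_mul_div_two_add_one_of_odd hao
  rcases exists_split_of_odd_length (a / 2) w hodd hne with
    ⟨p, x, s, rfl, hp, hx⟩ | ⟨p, x, y, s, rfl, hyx⟩
  · obtain ⟨up, hup, hp', hpd⟩ := exists_far_word hao p fun z hz => hw z (by simp [hz])
    obtain ⟨us, hus, hs', hsd⟩ := exists_far_word hao s fun z hz => hw z (by simp [hz])
    refine ⟨up ++ freeLetter a x :: us, by simp [hup, hus],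
      hp'.append (.cons (freeLetter_lt hao.pos x) hs'), ?_⟩
    rw [wordDist_append hup, wordDist_cons]
    have := half_lt_dist_freeLetter hao hx
    rw [Nat.even_iff] at hp
    simp only [Nat.odd_iff, List.length_append, List.length_cons] at hodd ⊢
    have : a / 2 * (p.length + (s.length + 1)) =
        a / 2 * p.length + a / 2 * s.length + a / 2 := by
      ring
    omega
  · obtain ⟨up, hup, hp', hpd⟩ := exists_far_word hao p fun z hz => hw z (by simp [hz])
    obtain ⟨us, hus, hs', hsd⟩ := exists_far_word hao s fun z hz => hw z (by simp [hz])
    refine ⟨up ++ 0 :: a :: us, by simp [hup, hus], hp'.append (.zero_top hs'), ?_⟩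
    rw [wordDist_append hup, wordDist_cons, wordDist_cons]
    have hxa := hw x (by simp)
    simp only [Nat.odd_iff, Nat.dist, List.length_append, List.length_cons] at hodd ⊢
    have : a / 2 * (p.length + (s.length + 1 + 1)) =
        a / 2 * p.length + a / 2 * s.length + 2 * (a / 2) := by
      ring
    omega

end OddLength

section Eccentricity

variable {a n : ℕ}

theorem wordDist_le_ecc (ha : 1 ≤ a) (v : MetallicVertex a n) {u : List ℕ}
    (hu : IsMetallicWord a u) (hlen : u.length = n) :
    wordDist u (List.ofFn fun i => (v.1 i : ℕ)) ≤ ecc a n v := by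
  obtain ⟨U, rfl⟩ := hu.exists_vertex ha hlen
  rw [wordDist_ofFn, ecc_eq_sup_l1Dist]
  exact (l1Dist_comm U v).trans_le (le_sup (f := l1Dist v) (mem_univ U))

theorem forall_mem_ofFn_le (v : MetallicVertex a n) :
    ∀ x ∈ List.ofFn fun i => (v.1 i : ℕ), x ≤ a := by
  simpa [List.mem_ofFn] using fun i => Nat.le_of_lt_succ (v.1 i).2

theorem le_ecc (hao : Odd a) (v : MetallicVertex a n) : a / 2 * n + n / 2 ≤ ecc a n v := by
  obtain ⟨u, hlen, hu, hdist⟩ := exists_far_word hao (List.ofFn fun i => (v.1 i : ℕ))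
    (forall_mem_ofFn_le v)
  rw [List.length_ofFn] at hlen hdist
  exact hdist.trans (wordDist_le_ecc hao.pos v hu hlen)

theorem lt_ecc_of_odd (hao : Odd a) (hno : Odd n) (v : MetallicVertex a n)
    (hv : ∃ i, (v.1 i : ℕ) ≠ a / 2) : a / 2 * n + n / 2 < ecc a n v := by
  obtain ⟨u, hlen, hu, hdist⟩ := exists_far_word_of_odd_length hao
    (List.ofFn fun i => (v.1 i : ℕ)) (forall_mem_ofFn_le v)
    (by rwa [List.length_ofFn]) (by simpa [List.mem_ofFn] using hv)
  rw [List.length_ofFn] at hlen hdist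
  exact hdist.trans (wordDist_le_ecc hao.pos v hu hlen)

theorem two_mul_card_top_le (ha : 1 ≤ a) (u : MetallicVertex a n) :
    2 * #{i | (u.1 i : ℕ) = a} ≤ n := by
  set top := ({i | (u.1 i : ℕ) = a} : Finset (Fin n))
  set zero := ({i | (u.1 i : ℕ) = 0} : Finset (Fin n))
  have hpred : ∀ i ∈ top, ∃ j : Fin n, (j : ℕ) + 1 = i ∧ j ∈ zero := fun i hi => by
    simpa [zero] using u.2 i (by simpa [top] using hi)
  choose! pred hpred using hpred
  have htop_zero : #top ≤ #zero := card_le_card_of_injOn pred (fun i hi => (hpred i hi).2)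
    fun i hi j hj hij => Fin.ext (by have := (hpred i hi).1; have := (hpred j hj).1; grind)
  have hdisj : Disjoint top zero := disjoint_filter.mpr fun i _ hi => by omega
  have := card_union_of_disjoint hdisj ▸ card_le_univ (top ∪ zero)
  simp only [Fintype.card_fin] at this
  omega

theorem ecc_le_of_forall_eq_half (ha : 1 ≤ a) (v : MetallicVertex a n)
    (hv : ∀ i, (v.1 i : ℕ) = a / 2) : ecc a n v ≤ a / 2 * n + n / 2 := by
  rw [ecc_eq_sup_l1Dist]
  refine Finset.sup_le fun u _ => ?_
  have hcoord : ∀ i, Nat.dist (v.1 i : ℕ) (u.1 i) ≤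
      a / 2 + if (u.1 i : ℕ) = a then 1 else 0 := by
    intro i
    have := (u.1 i).2
    rw [hv i, Nat.dist]
    split <;> omega
  have := two_mul_card_top_le ha u
  calc l1Dist v u ≤ ∑ i, (a / 2 + if (u.1 i : ℕ) = a then 1 else 0) :=
        sum_le_sum fun i _ => hcoord i
    _ = a / 2 * n + #{i | (u.1 i : ℕ) = a} := by simp [sum_add_distrib, sum_boole, mul_comm]
    _ ≤ a / 2 * n + n / 2 := by omega

end Eccentricity

theorem metallic_center_odd_odd_general (a n : ℕ)
    (hao : Odd a) (hno : Odd n) :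
    ∀ v : MetallicVertex a n,
      (∀ u : MetallicVertex a n, ecc a n v ≤ ecc a n u) ↔
        (∀ i : Fin n, (v.1 i : ℕ) = a / 2) := by
  intro v
  have ha := hao.pos
  let center : MetallicVertex a n :=
    ⟨fun _ => ⟨a / 2, by omega⟩, fun _ (h : a / 2 = a) => by omega⟩
  constructor
  · intro hmin
    by_contra! hv
    have := hmin center
    have := ecc_le_of_forall_eq_half ha center fun _ => rfl
    have := lt_ecc_of_odd hao hno v hv
    omega
  · exact fun hv u => (ecc_le_of_forall_eq_half ha v hv).trans (le_ecc hao u)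

/-- for `a` and `n` odd, the center of `Π^a_n` consists of the single
vertex `ε̂ = εε⋯ε` with `ε = ⌊a/2⌋ = (a−1)/2`: a vertex has minimum eccentricity iff
it is the constant string `ε̂`. -/
theorem metallic_center_odd_odd (a n : ℕ) (ha : 1 ≤ a) (hn : 1 ≤ n)
    (hao : Odd a) (hno : Odd n) :
    ∀ v : MetallicVertex a n,
      (∀ u : MetallicVertex a n, ecc a n v ≤ ecc a n u) ↔
        (∀ i : Fin n, (v.1 i : ℕ) = a / 2) :=
  metallic_center_odd_odd_general a n hao hno
end
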